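/- Let n > 3 and work in the affine space AG(n−1,3), i.e., the vector space (ZMod 3)^{n−1}, with affine basis a_1 = 0 and a_{i+1} = the i-th standard basis vector for 1 ≤ i ≤ n−1. For 1 ≤ i ≤ n let H_i be the affine span over ZMod 3 of {a_j : j ≠ i}, let X = H_1 ∪ … ∪ H_n, and let T be the family of 3-element sets {x, y, z} of distinct points with x + y + z = 0 that are contained in at least one H_i. Then T is a partial Steiner triple system (every pair of distinct points is contained in at most one member of T), the closure of {a_1, …, a_n} with respect to T equals X, and for each i the closure of {a_j : j ≠ i} with respect to T equals H_i, which is a proper subset of X; consequently {a_1, …, a_n} is a minimal spreading set of the partial system T on the point set X. -/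

import Mathlib

/-!
Over `ZMod 3` the third point of the line through `x ≠ y` is `-x - y`, and a set is an affine
subspace exactly when it is closed under `(x, y) ↦ -x - y`. Hence, when `T` consists of lines
and contains all lines of `affineSpan S`, the closure of `S` is that span; in particular the
closure of the base points other than `a i` is `H i`. The base is affinely independent, so
`a i ∉ H i`: a proper subset of the base lies in some `H i ⊊ X` and cannot spread, while
the whole base generates every `H i`, hence `X`.
-/

/-- A Steiner triple system on `V`: a family `T` of 3-element `Finset`s such that
every pair of distinct points lies in exactly one member of `T`. -/
def IsSTS {V : Type*} (T : Set (Finset V)) : Prop :=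
  (∀ t ∈ T, t.card = 3) ∧
    ∀ x y : V, x ≠ y → ∃! t : Finset V, t ∈ T ∧ x ∈ t ∧ y ∈ t

/-- `W` is closed w.r.t. the triple system `T`: whenever a triple of `T` contains two
points of `W`, all (in particular the third) of its points lie in `W`. -/
def StsClosed {V : Type*} (T : Set (Finset V)) (W : Set V) : Prop :=
  ∀ t ∈ T, ∀ x ∈ t, ∀ y ∈ t, x ≠ y → x ∈ W → y ∈ W → ∀ z ∈ t, z ∈ W

/-- The closure of `S` w.r.t. `T`: the smallest closed set containing `S`. -/
def stsCl {V : Type*} (T : Set (Finset V)) (S : Set V) : Set V :=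
  ⋂₀ {W : Set V | S ⊆ W ∧ StsClosed T W}

/-- `S` is a spreading set: its closure is the whole point set. -/
def IsSpreading {V : Type*} (T : Set (Finset V)) (S : Set V) : Prop :=
  stsCl T S = Set.univ

/-- `S` is a minimal spreading set: it is spreading but no proper subset is. -/
def IsMinSpreading {V : Type*} (T : Set (Finset V)) (S : Set V) : Prop :=
  IsSpreading T S ∧ ∀ S' : Set V, S' ⊂ S → ¬ IsSpreading T S'

/-- The affine base of `AG(n-1,3) = (ZMod 3)^(n-1)`: `a 0 = 0` and, for `i ≥ 1`,
`a i` is the `(i-1)`-st standard basis vector. -/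
def basePt (n : ℕ) (i : Fin n) : Fin (n - 1) → ZMod 3 :=
  if h : (i : ℕ) = 0 then 0
  else Pi.single (⟨(i : ℕ) - 1, by have := i.isLt; omega⟩ : Fin (n - 1)) 1

section Closure

variable {V : Type*} {T : Set (Finset V)} {S W : Set V}

lemma subset_stsCl (T : Set (Finset V)) (S : Set V) : S ⊆ stsCl T S :=
  fun _ hx => Set.mem_sInter.2 fun _ hW => hW.1 hx

lemma stsCl_subset_of_stsClosed (hSW : S ⊆ W) (hW : StsClosed T W) : stsCl T S ⊆ W :=
  Set.sInter_subset_of_mem ⟨hSW, hW⟩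

lemma stsClosed_stsCl (T : Set (Finset V)) (S : Set V) : StsClosed T (stsCl T S) :=
  fun t ht x hx y hy hxy hxS hyS z hz => Set.mem_sInter.2 fun W hW =>
    hW.2 t ht x hx y hy hxy (Set.mem_sInter.1 hxS W hW) (Set.mem_sInter.1 hyS W hW) z hz

lemma stsCl_mono {S' : Set V} (h : S' ⊆ S) : stsCl T S' ⊆ stsCl T S :=
  Set.sInter_subset_sInter fun _ hW => ⟨h.trans hW.1, hW.2⟩

lemma stsClosed_of_forall_subset (h : ∀ t ∈ T, (t : Set V) ⊆ W) : StsClosed T W :=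
  fun t ht _ _ _ _ _ _ _ _ hz => h t ht hz

end Closure

section Lines

variable {V : Type*} [AddCommGroup V] [DecidableEq V] {T : Set (Finset V)}

def lineThrough (x y : V) : Finset V := {x, y, -x - y}

lemma eq_lineThrough {t : Finset V} (h3 : t.card = 3) (h0 : ∑ z ∈ t, z = 0) {x y : V}
    (hx : x ∈ t) (hy : y ∈ t) (hxy : x ≠ y) : t = lineThrough x y := by
  have hy' : y ∈ t.erase x := Finset.mem_erase.2 ⟨hxy.symm, hy⟩
  obtain ⟨z, hz⟩ : ∃ z, (t.erase x).erase y = {z} := Finset.card_eq_one.1 <| by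
    rw [Finset.card_erase_of_mem hy', Finset.card_erase_of_mem hx, h3]
  have hsum : x + (y + z) = 0 := by
    rw [← h0, ← Finset.add_sum_erase _ _ hx, ← Finset.add_sum_erase _ _ hy', hz,
      Finset.sum_singleton]
  rw [lineThrough, ← Finset.insert_erase hx, ← Finset.insert_erase hy', hz,
    show z = -x - y by linear_combination (norm := module) hsum]

lemma stsClosed_of_neg_sub_mem (hT : ∀ t ∈ T, t.card = 3 ∧ ∑ x ∈ t, x = 0) {W : Set V}
    (hW : ∀ x ∈ W, ∀ y ∈ W, -x - y ∈ W) : StsClosed T W := by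
  intro t ht x hx y hy hxy hxW hyW z hz
  rw [eq_lineThrough (hT t ht).1 (hT t ht).2 hx hy hxy] at hz
  simp only [lineThrough, Finset.mem_insert, Finset.mem_singleton] at hz
  rcases hz with rfl | rfl | rfl
  exacts [hxW, hyW, hW x hxW y hyW]

end Lines

section ZModThree

variable {V : Type*} [AddCommGroup V] [Module (ZMod 3) V]

lemma add_add_self_eq_zero (v : V) : v + v + v = 0 := by
  have h : ((3 : ℕ) : ZMod 3) • v = 0 := by rw [ZMod.natCast_self, zero_smul]
  rwa [Nat.cast_smul_eq_nsmul, succ_nsmul, two_nsmul] at h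

lemma neg_sub_ne_left {x y : V} (hxy : x ≠ y) : -x - y ≠ x := by
  intro h
  apply hxy
  linear_combination (norm := module) h + add_add_self_eq_zero x

lemma neg_sub_ne_right {x y : V} (hxy : x ≠ y) : -x - y ≠ y := by
  intro h
  apply hxy
  linear_combination (norm := module) -h - add_add_self_eq_zero y

lemma AffineSubspace.neg_sub_mem (A : AffineSubspace (ZMod 3) V) {x y : V} (hx : x ∈ A)
    (hy : y ∈ A) : -x - y ∈ A := by
  have h := A.smul_vsub_vadd_mem (-1) hx hy hy
  rwa [vsub_eq_sub, vadd_eq_add, show (-1 : ZMod 3) • (x - y) + y = -x - y by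
    linear_combination (norm := module) add_add_self_eq_zero y] at h

/-- Over `ZMod 3` the affine combinations `c • (p₁ - p₂) + p₃` are, for `c = 0, 1, -1`,
built from the third-point map `(x, y) ↦ -x - y` alone. -/
def AffineSubspace.ofNegSubMem (W : Set V) (hW : ∀ x ∈ W, ∀ y ∈ W, -x - y ∈ W) :
    AffineSubspace (ZMod 3) V where
  carrier := W
  smul_vsub_vadd_mem' c p₁ p₂ p₃ h₁ h₂ h₃ := by
    have hsub : ∀ a ∈ W, ∀ b ∈ W, ∀ d ∈ W, a - b + d ∈ W := fun a ha b hb d hd => by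
      simpa only [show -(-a - d) - b = a - b + d by abel] using hW _ (hW a ha d hd) b hb
    rw [vsub_eq_sub, vadd_eq_add]
    obtain rfl | rfl | rfl : c = 0 ∨ c = 1 ∨ c = -1 := by revert c; decide
    · simpa using h₃
    · simpa using hsub _ h₁ _ h₂ _ h₃
    · simpa [neg_smul] using hsub _ h₂ _ h₁ _ h₃

lemma affineSpan_subset_of_neg_sub_mem {S W : Set V} (hSW : S ⊆ W)
    (hW : ∀ x ∈ W, ∀ y ∈ W, -x - y ∈ W) : (affineSpan (ZMod 3) S : Set V) ⊆ W :=
  affineSpan_le (Q := AffineSubspace.ofNegSubMem W hW) |>.2 hSW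

variable [DecidableEq V]

lemma card_lineThrough {x y : V} (hxy : x ≠ y) : (lineThrough x y).card = 3 :=
  Finset.card_eq_three.2 ⟨x, y, -x - y, hxy, (neg_sub_ne_left hxy).symm,
    (neg_sub_ne_right hxy).symm, rfl⟩

lemma sum_lineThrough {x y : V} (hxy : x ≠ y) : ∑ z ∈ lineThrough x y, z = 0 := by
  rw [lineThrough, Finset.sum_insert (by simp [hxy, (neg_sub_ne_left hxy).symm]),
    Finset.sum_pair (neg_sub_ne_right hxy).symm]
  abel

lemma coe_lineThrough_subset {x y : V} {A : AffineSubspace (ZMod 3) V} (hx : x ∈ A)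
    (hy : y ∈ A) : (lineThrough x y : Set V) ⊆ A := by
  simp only [lineThrough, Finset.coe_insert, Finset.coe_singleton, Set.insert_subset_iff,
    Set.singleton_subset_iff, SetLike.mem_coe]
  exact ⟨hx, hy, A.neg_sub_mem hx hy⟩

variable {T : Set (Finset V)}

theorem stsCl_eq_affineSpan (hT : ∀ t ∈ T, t.card = 3 ∧ ∑ x ∈ t, x = 0) {S : Set V}
    (hST : ∀ x ∈ affineSpan (ZMod 3) S, ∀ y ∈ affineSpan (ZMod 3) S, x ≠ y →
      lineThrough x y ∈ T) :
    stsCl T S = affineSpan (ZMod 3) S := by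
  set A := affineSpan (ZMod 3) S
  refine (stsCl_subset_of_stsClosed (subset_affineSpan _ S)
    (stsClosed_of_neg_sub_mem hT fun x hx y hy => A.neg_sub_mem hx hy)).antisymm ?_
  suffices h : (A : Set V) ⊆ stsCl T S ∩ A from fun x hx => (h hx).1
  refine affineSpan_subset_of_neg_sub_mem
    (fun x hx => ⟨subset_stsCl T S hx, subset_affineSpan _ S hx⟩) ?_
  rintro x ⟨hxS, hxA⟩ y ⟨hyS, hyA⟩
  by_cases hxy : x = y
  · subst hxy
    rw [show -x - x = x by linear_combination (norm := module) -add_add_self_eq_zero x]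
    exact ⟨hxS, hxA⟩
  refine ⟨?_, A.neg_sub_mem hxA hyA⟩
  exact stsClosed_stsCl T S _ (hST x hxA y hyA hxy) x (by simp [lineThrough])
    y (by simp [lineThrough]) hxy hxS hyS _ (by simp [lineThrough])

end ZModThree

lemma affineIndependent_basePt {n : ℕ} (hn : 0 < n) :
    AffineIndependent (ZMod 3) (basePt n) := by
  let o : Fin n := ⟨0, hn⟩
  have hpos (j : {j // j ≠ o}) : (j.1 : ℕ) ≠ 0 := fun h => j.2 (Fin.ext h)
  let e : {j // j ≠ o} → Fin (n - 1) := fun j => ⟨j.1 - 1, by omega⟩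
  have he : Function.Injective e := fun j k h => by
    have := hpos j; have := hpos k
    simp only [e, Fin.mk.injEq] at h
    exact Subtype.ext (Fin.ext (by omega))
  have hsingle : (fun j : {j // j ≠ o} => basePt n j -ᵥ basePt n o) =
      fun j => Pi.single (e j) 1 := by
    funext j
    simp [basePt, o, hpos j, e]
  rw [affineIndependent_iff_linearIndependent_vsub _ _ o, hsingle]
  exact (Pi.linearIndependent_single_one _ _).comp e he

lemma exists_subset_image_ne_of_ssubset_range {ι α : Type*} {f : ι → α} {S : Set α}
    (h : S ⊂ Set.range f) : ∃ i, S ⊆ f '' {j | j ≠ i} := by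
  obtain ⟨_, ⟨i, rfl⟩, hi⟩ := Set.exists_of_ssubset h
  refine ⟨i, fun x hx => ?_⟩
  obtain ⟨j, rfl⟩ := h.1 hx
  exact ⟨j, fun hji => hi (hji ▸ hx), rfl⟩

/-- Construction of a partial Steiner triple system with a minimal spreading set of
size `n`: in `AG(n-1,3)` with affine base `a 0, …, a (n-1)`, let `H i` be the affine
span of the base points other than `a i`, let `X = ⋃ i, H i`, and let `T` consist of
the affine lines (3-element sets of distinct points summing to `0`) contained in some
`H i`. Then `T` is a partial STS (each pair of points lies in at most one triple),
`cl {a 0, …, a (n-1)} = X`, and for each `i` the closure of the base points other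
than `a i` is `H i ⊊ X`; consequently `{a 0, …, a (n-1)}` is a minimal spreading set
of the partial system `T` on the point set `X`. -/
theorem partial_sts_minSpreading_n (n : ℕ) (hn : 3 < n) :
    ∀ H : Fin n → Set (Fin (n - 1) → ZMod 3),
      H = (fun i => (affineSpan (ZMod 3) (basePt n '' {j | j ≠ i}) : Set _)) →
    ∀ X : Set (Fin (n - 1) → ZMod 3), X = ⋃ i, H i →
    ∀ T : Set (Finset (Fin (n - 1) → ZMod 3)),
      T = {t | t.card = 3 ∧ ∑ x ∈ t, x = 0 ∧ ∃ i, ↑t ⊆ H i} →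
    (∀ x y : Fin (n - 1) → ZMod 3, x ≠ y →
        ∀ t₁ ∈ T, ∀ t₂ ∈ T, x ∈ t₁ → y ∈ t₁ → x ∈ t₂ → y ∈ t₂ → t₁ = t₂) ∧
    stsCl T (Set.range (basePt n)) = X ∧
    (∀ i : Fin n, stsCl T (basePt n '' {j | j ≠ i}) = H i ∧ H i ⊂ X) ∧
    (∀ S : Set (Fin (n - 1) → ZMod 3), S ⊂ Set.range (basePt n) →
      stsCl T S ≠ X) := by
  intro H hH X hX T hT
  subst hX
  have hT' : ∀ t, t ∈ T ↔ t.card = 3 ∧ ∑ x ∈ t, x = 0 ∧ ∃ i, ↑t ⊆ H i := Set.ext_iff.1 hT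
  have hline (t) (ht : t ∈ T) : t.card = 3 ∧ ∑ x ∈ t, x = 0 :=
    ⟨((hT' t).1 ht).1, ((hT' t).1 ht).2.1⟩
  have hcl (i : Fin n) : stsCl T (basePt n '' {j | j ≠ i}) = H i := by
    rw [hH]
    exact stsCl_eq_affineSpan hline fun x hx y hy hxy => (hT' _).2
      ⟨card_lineThrough hxy, sum_lineThrough hxy, i, hH ▸ coe_lineThrough_subset hx hy⟩
  have hnot (i : Fin n) : basePt n i ∉ H i := by
    simpa [hH] using (affineIndependent_basePt (by omega)).mem_affineSpan_iff i {j | j ≠ i}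
  have hmem (i : Fin n) : basePt n i ∈ ⋃ k, H k := by
    have : Nontrivial (Fin n) := Fin.nontrivial_iff_two_le.2 (by omega)
    obtain ⟨j, hji⟩ := exists_ne i
    exact Set.mem_iUnion.2 ⟨j, hH ▸ subset_affineSpan _ _ ⟨i, hji.symm, rfl⟩⟩
  refine ⟨fun x y hxy t₁ h₁ t₂ h₂ hx₁ hy₁ hx₂ hy₂ => ?_, ?_, fun i => ⟨hcl i, ?_⟩, ?_⟩
  · rw [eq_lineThrough (hline t₁ h₁).1 (hline t₁ h₁).2 hx₁ hy₁ hxy,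
      eq_lineThrough (hline t₂ h₂).1 (hline t₂ h₂).2 hx₂ hy₂ hxy]
  · refine (stsCl_subset_of_stsClosed (Set.range_subset_iff.2 hmem)
      (stsClosed_of_forall_subset fun t ht => ?_)).antisymm (Set.iUnion_subset fun i => ?_)
    · obtain ⟨-, -, i, hi⟩ := (hT' t).1 ht
      exact hi.trans (Set.subset_iUnion H i)
    · exact hcl i ▸ stsCl_mono (Set.image_subset_range _ _)
  · exact (Set.subset_iUnion H i).ssubset_of_not_subset fun hXH => hnot i (hXH (hmem i))
  · intro S hS hSX
    obtain ⟨i, hi⟩ := exists_subset_image_ne_of_ssubset_range hS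
    exact hnot i (hcl i ▸ stsCl_mono hi (hSX ▸ hmem i))
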